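/- Let C be an abelian category with all objects of finite length, let A be a simple object, and let φ : M → N be a morphism with (A : coker φ) = 0. Suppose N = N_A ⊕ N' where N_A is semisimple A-isotypic and (A : N') = 0. Then the composition of φ with the projection N → N_A is an epimorphism. -/

import Mathlib

open CategoryTheory Limits

attribute [local instance] CategoryTheory.Limits.HasFiniteBiproducts.of_hasFiniteProducts

namespace CuspidalClean

variable {C : Type*} [Category C] [Abelian C]

/-- A composition series of an object `M` of an abelian category: a finite increasing chain
of subobjects from `⊥` to `⊤` all of whose successive quotients are simple. -/
structure CompSeries (M : C) where
  n : ℕ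
  chain : Fin (n + 1) → Subobject M
  mono : Monotone chain
  bot : chain 0 = ⊥
  top : chain (Fin.last n) = ⊤
  simple : ∀ i : Fin n,
    Simple (cokernel (Subobject.ofLE _ _ (mono (Fin.castSucc_lt_succ : Fin.castSucc i < i.succ).le)))

/-- The number of factors of a composition series isomorphic to a given object `A`. -/
noncomputable def CompSeries.mult {M : C} (s : CompSeries M) (A : C) : ℕ :=
  Nat.card {i : Fin s.n //
    Nonempty (cokernel (Subobject.ofLE _ _ (s.mono (Fin.castSucc_lt_succ : Fin.castSucc i < i.succ).le)) ≅ A)}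

/-- The Jordan–Hölder multiplicity `(A : M)`: the number of composition factors of `M`
isomorphic to `A` (computed as the supremum over all composition series; by the
Jordan–Hölder theorem this is the common value when `M` has finite length). -/
noncomputable def mult (A M : C) : ℕ :=
  sSup {k : ℕ | ∃ s : CompSeries M, s.mult A = k}

/-- An abelian category has all objects of finite length iff every object admits a
composition series. -/
def FiniteLength (C : Type*) [Category C] [Abelian C] : Prop :=
  ∀ M : C, Nonempty (CompSeries M)

/-- `M` is `A`-isotypic if it is a finite direct sum of copies of `A`. -/
def IsIsotypic (A M : C) : Prop :=
  ∃ n : ℕ, Nonempty (M ≅ ⨁ fun _ : Fin n => A)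

/-- `M` is semisimple if it is a finite direct sum of simple objects. -/
def IsSemisimpleObj (M : C) : Prop :=
  ∃ (n : ℕ) (f : Fin n → C), (∀ i, Simple (f i)) ∧ Nonempty (M ≅ ⨁ f)

end CuspidalClean

/-!
If `ψ = φ ≫ pr` had a nonzero cokernel, that cokernel would be a quotient of `cokernel φ` and also
of the `A`-isotypic `N_A`; a simple quotient `S` of it receives a nonzero map from one of the copies
of `A`, so `S ≅ A` by Schur. Thus `cokernel φ` maps onto `A`, and a composition series of the kernel
extended by this quotient has `A` as a factor, contradicting `(A : cokernel φ) = 0`.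

Since `mult` is a supremum over composition series (which is `0` when unbounded), this needs
Jordan–Hölder: subobjects in an abelian category form a modular lattice, so Mathlib's
Jordan–Hölder theorem for modular lattices makes all composition series equally long.
-/

namespace CategoryTheory.Subobject

variable {C : Type*} [Category C]

theorem mk_comp_arrow_le_mk_comp_arrow {K X : C} (ι : K ⟶ X) [Mono ι] {p q : Subobject K}
    (h : p ≤ q) : mk (p.arrow ≫ ι) ≤ mk (q.arrow ≫ ι) :=
  mk_le_mk_of_comm (ofLE p q h) (by simp)

theorem mk_arrow_comp_arrow_of_eq_top {Q : C} {k : Subobject Q} {p : Subobject (k : C)}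
    (hp : p = ⊤) : mk (p.arrow ≫ k.arrow) = k := by
  subst hp
  exact (mk_eq_mk_of_comm _ _ (asIso (⊤ : Subobject (k : C)).arrow) rfl).trans (mk_arrow k)

variable [Abelian C] {X : C}

theorem le_of_epi_of_factors {P : C} {d s : Subobject X} (p : P ⟶ d) [Epi p]
    (h : s.Factors (p ≫ d.arrow)) : d ≤ s :=
  have := strongEpi_of_epi p
  have sq : CommSq (s.factorThru _ h) p s.arrow d.arrow := ⟨s.factorThru_arrow _ h⟩
  le_of_comm sq.lift sq.fac_right

theorem exists_epi_comp_arrow_eq_add_of_le_sup {a b d : Subobject X} (h : d ≤ a ⊔ b) :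
    ∃ (P : C) (p : P ⟶ d) (f₁ : P ⟶ a) (f₂ : P ⟶ b),
      Epi p ∧ p ≫ d.arrow = f₁ ≫ a.arrow + f₂ ≫ b.arrow := by
  let u := biprod.desc a.arrow b.arrow
  have hd : d ≤ imageSubobject u := h.trans <| sup_le
    (le_of_comm (biprod.inl ≫ factorThruImageSubobject u) (by simp [u]))
    (le_of_comm (biprod.inr ≫ factorThruImageSubobject u) (by simp [u]))
  refine ⟨Limits.pullback (factorThruImageSubobject u) (ofLE _ _ hd), pullback.snd _ _,
    pullback.fst _ _ ≫ biprod.fst, pullback.fst _ _ ≫ biprod.snd, inferInstance, ?_⟩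
  rw [← ofLE_arrow hd, ← Category.assoc, ← pullback.condition, Category.assoc,
    imageSubobject_arrow_comp, Category.assoc, Category.assoc, ← Preadditive.comp_add]
  congr 1
  ext <;> simp [u]

instance : IsModularLattice (Subobject X) where
  sup_inf_le_assoc_of_le {a} b {c} hac := by
    obtain ⟨P, p, f₁, f₂, _, hp⟩ := exists_epi_comp_arrow_eq_add_of_le_sup
      (_root_.inf_le_left : (a ⊔ b) ⊓ c ≤ a ⊔ b)
    refine le_of_epi_of_factors p ?_
    have hc : c.Factors (f₂ ≫ b.arrow) := by
      have := factors_add _ _ (factors_of_factors_right p (inf_arrow_factors_right _ _))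
        (factors_of_factors_right (-f₁) (factors_of_le _ hac (factors_self a)))
      rwa [hp, Preadditive.neg_comp, add_neg_cancel_comm] at this
    rw [hp]
    exact factors_add _ _ (sup_factors_of_factors_left (factors_comp_arrow f₁))
      (sup_factors_of_factors_right ((inf_factors _).2 ⟨factors_comp_arrow f₂, hc⟩))

theorem le_of_ofLE_comp_cokernel_π_eq_zero {a b m : Subobject X} (hab : a ≤ b) (hmb : m ≤ b)
    (h : ofLE m b hmb ≫ cokernel.π (ofLE a b hab) = 0) : m ≤ a :=
  le_of_comm (Abelian.monoLift (ofLE a b hab) (ofLE m b hmb) h)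
    (by rw [← ofLE_arrow hab, Abelian.monoLift_comp_assoc, ofLE_arrow])

theorem le_of_epi_ofLE_comp_cokernel_π {a b m : Subobject X} (ham : a ≤ m) (hmb : m ≤ b)
    [Epi (ofLE m b hmb ≫ cokernel.π (ofLE a b (ham.trans hmb)))] : b ≤ m := by
  have hc : ofLE a b (ham.trans hmb) ≫ cokernel.π (ofLE m b hmb) = 0 := by
    rw [← ofLE_comp_ofLE a m b ham hmb, Category.assoc, cokernel.condition, comp_zero]
  -- the induced map `cokernel (ofLE a b) ⟶ cokernel (ofLE m b)` kills the image of the epi from `m`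
  have hdesc : cokernel.desc _ _ hc = 0 := by
    rw [← cancel_epi (ofLE m b hmb ≫ cokernel.π _)]
    simp
  have : Epi (ofLE m b hmb) := Abelian.epi_of_cokernel_π_eq_zero _ <| by
    rw [← cokernel.π_desc _ _ hc, hdesc, comp_zero]
  have := isIso_of_mono_of_epi (ofLE m b hmb)
  exact le_of_comm (inv (ofLE m b hmb)) (by simp)

theorem covBy_of_simple_cokernel_ofLE {a b : Subobject X} (hab : a ≤ b)
    [Simple (cokernel (ofLE a b hab))] : a ⋖ b := by
  refine ⟨hab.lt_of_ne ?_, fun {m} ham hmb => ?_⟩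
  · rintro rfl
    have : IsIso (ofLE a a hab) := by rw [ofLE_refl]; infer_instance
    exact Simple.not_isZero _ (isZero_cokernel_of_epi (ofLE a a hab))
  by_cases h : ofLE m b hmb.le ≫ cokernel.π (ofLE a b hab) = 0
  · exact ham.not_ge (le_of_ofLE_comp_cokernel_π_eq_zero hab hmb.le h)
  · have := epi_of_nonzero_to_simple h
    exact hmb.not_ge (le_of_epi_ofLE_comp_cokernel_π ham.le hmb.le)

noncomputable def cokernelOfLEIsoOfEq {a b a' b' : Subobject X} (ha : a = a') (hb : b = b')
    (h : a ≤ b) : cokernel (ofLE a b h) ≅ cokernel (ofLE a' b' (ha ▸ hb ▸ h)) := by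
  subst ha hb
  exact Iso.refl _

noncomputable def cokernelOfLEMkCompArrowIso {K : C} (ι : K ⟶ X) [Mono ι] {p q : Subobject K}
    (h : p ≤ q) :
    cokernel (ofLE _ _ (mk_comp_arrow_le_mk_comp_arrow ι h)) ≅ cokernel (ofLE p q h) :=
  cokernel.mapIso _ _ (underlyingIso _) (underlyingIso _) <| by
    simp [← cancel_mono (q.arrow ≫ ι)]

noncomputable def cokernelOfLEKernelSubobjectTopIso {A : C} (h : X ⟶ A) [Epi h] :
    cokernel ((kernelSubobject h).ofLE ⊤ le_top) ≅ A :=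
  cokernelIsoOfEq (by simp [← cancel_mono (⊤ : Subobject X).arrow]) ≪≫
    cokernelCompIsIso (kernelSubobject h).arrow (inv (⊤ : Subobject X).arrow) ≪≫
    cokernelIsoOfEq (kernelSubobject_arrow h).symm ≪≫ cokernelEpiComp _ _ ≪≫
    (cokernelIsCokernel _).coconePointUniqueUpToIso
      (Abelian.epiIsCokernelOfKernel _ (kernelIsKernel h))

end CategoryTheory.Subobject

namespace CuspidalClean

open Subobject

variable {C : Type*} [Category C] [Abelian C] {Q : C}

namespace CompSeries

def toCompositionSeries (s : CompSeries Q) : CompositionSeries (Subobject Q) where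
  length := s.n
  toFun := s.chain
  step i := have := s.simple i; covBy_of_simple_cokernel_ofLE _

theorem n_eq (s t : CompSeries Q) : s.n = t.n :=
  (CompositionSeries.jordan_holder s.toCompositionSeries t.toCompositionSeries
    (s.bot.trans t.bot.symm) (s.top.trans t.top.symm)).length_eq

theorem mult_le_n (s : CompSeries Q) (A : C) : s.mult A ≤ s.n :=
  (Nat.card_le_card_of_injective _ Subtype.val_injective).trans (Nat.card_fin s.n).le

theorem mult_le_mult (s : CompSeries Q) (A : C) : s.mult A ≤ CuspidalClean.mult A Q :=
  le_csSup ⟨s.n, by rintro _ ⟨t, rfl⟩; exact (t.mult_le_n A).trans (n_eq t s).le⟩ ⟨s, rfl⟩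

noncomputable def snoc (k : Subobject Q) (s : CompSeries (k : C))
    [Simple (cokernel (k.ofLE ⊤ le_top))] : CompSeries Q where
  n := s.n + 1
  chain := Fin.snoc (fun i => Subobject.mk ((s.chain i).arrow ≫ k.arrow)) ⊤
  mono := by
    refine Fin.monotone_iff_le_succ.2 (Fin.lastCases ?_ fun j => ?_)
    · simp
    · simpa only [Fin.succ_castSucc, Fin.snoc_castSucc] using
        mk_comp_arrow_le_mk_comp_arrow k.arrow (s.mono (Fin.castSucc_le_succ j))
  bot := by
    rw [← Fin.castSucc_zero, Fin.snoc_castSucc, s.bot, mk_eq_bot_iff_zero, bot_arrow, zero_comp]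
  top := Fin.snoc_last _ _
  simple i := by
    refine Fin.lastCases ?_ (fun j => ?_) i
    · refine Simple.of_iso (cokernelOfLEIsoOfEq (a' := k) (b' := ⊤) ?_ ?_ _)
      · rw [Fin.snoc_castSucc, mk_arrow_comp_arrow_of_eq_top s.top]
      · rw [Fin.succ_last, Fin.snoc_last]
    · have := s.simple j
      refine Simple.of_iso (cokernelOfLEIsoOfEq ?_ ?_ _ ≪≫
        cokernelOfLEMkCompArrowIso k.arrow (s.mono (Fin.castSucc_le_succ j)))
      · rw [Fin.snoc_castSucc]
      · rw [Fin.succ_castSucc, Fin.snoc_castSucc]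

theorem snoc_chain_castSucc_last (k : Subobject Q) (s : CompSeries (k : C))
    [Simple (cokernel (k.ofLE ⊤ le_top))] : (s.snoc k).chain (Fin.last s.n).castSucc = k := by
  dsimp only [snoc]
  rw [Fin.snoc_castSucc, mk_arrow_comp_arrow_of_eq_top s.top]

theorem snoc_chain_last (k : Subobject Q) (s : CompSeries (k : C))
    [Simple (cokernel (k.ofLE ⊤ le_top))] : (s.snoc k).chain (Fin.last s.n).succ = ⊤ := by
  dsimp only [snoc]
  rw [Fin.succ_last, Fin.snoc_last]

theorem mult_snoc_ne_zero (k : Subobject Q) (s : CompSeries (k : C))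
    [Simple (cokernel (k.ofLE ⊤ le_top))] {A : C} (e : cokernel (k.ofLE ⊤ le_top) ≅ A) :
    (s.snoc k).mult A ≠ 0 :=
  Nat.card_ne_zero.2 ⟨⟨⟨Fin.last s.n, ⟨cokernelOfLEIsoOfEq
    (snoc_chain_castSucc_last k s) (snoc_chain_last k s) _ ≪≫ e⟩⟩⟩, inferInstance⟩

theorem exists_epi_to_simple (s : CompSeries Q) (hQ : ¬IsZero Q) :
    ∃ (S : C) (g : Q ⟶ S), Simple S ∧ Epi g := by
  have hn : s.n ≠ 0 := fun hn => by
    have := nontrivial_of_not_isZero hQ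
    refine bot_ne_top (s.bot.symm.trans (Eq.trans ?_ s.top))
    exact congrArg s.chain (Fin.ext (by simp [hn]))
  let i : Fin s.n := ⟨s.n - 1, by omega⟩
  have htop : s.chain i.succ = ⊤ := by
    rw [show i.succ = Fin.last s.n from Fin.ext (by simp [i]; omega), s.top]
  exact ⟨_, inv (⊤ : Subobject Q).arrow ≫ (isoOfEq _ _ htop).inv ≫ cokernel.π _, s.simple i,
    inferInstance⟩

end CompSeries

theorem mult_ne_zero_of_epi (hC : FiniteLength C) {A : C} [Simple A] (h : Q ⟶ A) [Epi h] :
    mult A Q ≠ 0 := by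
  have := Simple.of_iso (cokernelOfLEKernelSubobjectTopIso h)
  obtain ⟨s⟩ := hC (kernelSubobject h : C)
  intro h0
  exact s.mult_snoc_ne_zero _ (cokernelOfLEKernelSubobjectTopIso h)
    (Nat.le_zero.1 (h0 ▸ (s.snoc _).mult_le_mult A))

theorem IsIsotypic.nonempty_iso_of_epi {A N S : C} [Simple A] [Simple S] (hN : IsIsotypic A N)
    (g : N ⟶ S) [Epi g] : Nonempty (S ≅ A) := by
  obtain ⟨n, ⟨e⟩⟩ := hN
  obtain ⟨j, hj⟩ : ∃ j, biproduct.ι (fun _ : Fin n => A) j ≫ e.inv ≫ g ≠ 0 := by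
    by_contra! h
    have : Epi (e.inv ≫ g) := inferInstance
    rw [biproduct.hom_ext' _ _ (h · |>.trans comp_zero.symm)] at this
    exact Simple.not_isZero S (IsZero.of_epi_zero (⨁ fun _ : Fin n => A) S)
  have := isIso_of_hom_simple hj
  exact ⟨(asIso (biproduct.ι _ j ≫ e.inv ≫ g)).symm⟩

theorem epi_comp_of_mult_cokernel_eq_zero (hC : FiniteLength C) {A : C} [Simple A] {M N P : C}
    (φ : M ⟶ N) (q : N ⟶ P) [Epi q] (hφ : mult A (cokernel φ) = 0) (hP : IsIsotypic A P) :
    Epi (φ ≫ q) := by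
  refine Preadditive.epi_of_isZero_cokernel _ (by_contra fun hφq => ?_)
  obtain ⟨S, g, _, _⟩ := (hC _).some.exists_epi_to_simple hφq
  obtain ⟨i⟩ := hP.nonempty_iso_of_epi (cokernel.π (φ ≫ q) ≫ g)
  exact mult_ne_zero_of_epi hC (cokernel.desc φ (q ≫ cokernel.π (φ ≫ q))
    (by rw [← Category.assoc, cokernel.condition]) ≫ g ≫ i.hom) hφ

end CuspidalClean

open CuspidalClean in
theorem epi_comp_projection_of_mult_coker_eq_zero_general {C : Type*} [Category C] [Abelian C]
    (hC : FiniteLength C) (A : C) [Simple A] {M N NA N' : C} (φ : M ⟶ N)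
    (hcoker : mult A (cokernel φ) = 0) (e : N ≅ NA ⊞ N')
    (hNAiso : IsIsotypic A NA) :
    Epi (φ ≫ e.hom ≫ biprod.fst) :=
  epi_comp_of_mult_cokernel_eq_zero hC φ _ hcoker hNAiso

open CuspidalClean in
/-- If `(A : coker φ) = 0` and `N = N_A ⊕ N'` with `N_A` semisimple `A`-isotypic and
`(A : N') = 0`, then the composition of `φ` with the projection `N → N_A` is an
epimorphism. -/
theorem epi_comp_projection_of_mult_coker_eq_zero {C : Type*} [Category C] [Abelian C]
    (hC : FiniteLength C) (A : C) [Simple A] {M N NA N' : C} (φ : M ⟶ N)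
    (hcoker : mult A (cokernel φ) = 0) (e : N ≅ NA ⊞ N')
    (hNA : IsSemisimpleObj NA) (hNAiso : IsIsotypic A NA) (hN' : mult A N' = 0) :
    Epi (φ ≫ e.hom ≫ biprod.fst) :=
  epi_comp_projection_of_mult_coker_eq_zero_general hC A φ hcoker e hNAiso
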